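/- Let H = ∑_l p_l P_l with P_l Hermitian involutions and (p_l) a probability distribution, and let ψ be a unit vector. Then the expected value over independent samples l_1,…,l_r ~ p of ⟨ψ, exp(-iφP_{l_r})⋯exp(-iφP_{l_1}) ψ⟩, with φ = arctan(τ), equals (1+τ²)^{-r/2} ⟨ψ, (I - iτH)^r ψ⟩. -/

import Mathlib

/-!
Since `P² = 1`, the exponential of `-iφP` is `cos φ - i sin φ P`, which for `φ = arctan τ` is
`(1 + τ²)^(-1/2) (1 - iτP)`. So each sampled product is `(1 + τ²)^(-r/2)` times a product of the
factors `1 - iτP_{l_i}`; that product is multilinear in its factors, so averaging the independent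
indices one factor at a time turns it into the `r`-th power of `∑ p_l (1 - iτP_l) = 1 - iτH`,
without any commutativity of the `P_l`.
-/

open Matrix Complex

theorem List.prod_map_smul {ι R M : Type*} [CommMonoid R] [Monoid M] [MulAction R M]
    [IsScalarTower R M M] [SMulCommClass R M M] (l : List ι) (a : ι → R) (f : ι → M) :
    (l.map fun i => a i • f i).prod = (l.map a).prod • (l.map f).prod := by
  induction l with
  | nil => simp
  | cons i l ih => simp only [List.map_cons, List.prod_cons, ih, smul_mul_smul_comm]

theorem List.prod_reverse_ofFn_smul {R M : Type*} [CommMonoid R] [Monoid M] [MulAction R M]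
    [IsScalarTower R M M] [SMulCommClass R M M] {r : ℕ} (a : Fin r → R) (f : Fin r → M) :
    (List.ofFn fun i => a i • f i).reverse.prod = (∏ i, a i) • (List.ofFn f).reverse.prod := by
  rw [List.ofFn_eq_map, List.ofFn_eq_map, ← List.map_reverse, ← List.map_reverse,
    List.prod_map_smul, List.map_reverse, List.prod_reverse, ← List.ofFn_eq_map, List.prod_ofFn]

theorem Finset.sum_prod_reverse_ofFn_eq_pow {R ι : Type*} [Semiring R] [Fintype ι] (N : ι → R)
    (r : ℕ) : ∑ l : Fin r → ι, (List.ofFn fun i => N (l i)).reverse.prod = (∑ i, N i) ^ r := by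
  induction r with
  | zero => simp
  | succ r ih =>
    rw [← (Fin.consEquiv fun _ => ι).sum_comp, Fintype.sum_prod_type, pow_succ, ← ih,
      Finset.sum_mul_sum, Finset.sum_comm]
    simp [List.ofFn_succ, Fin.consEquiv_apply]

theorem Real.inv_sqrt_pow {x : ℝ} (hx : 0 ≤ x) (r : ℕ) : (√x)⁻¹ ^ r = x ^ (-(r : ℝ) / 2) := by
  rw [Real.sqrt_eq_rpow, ← Real.rpow_neg hx, ← Real.rpow_natCast, ← Real.rpow_mul hx]
  ring_nf

section Involution

variable {𝔸 : Type*} [NormedRing 𝔸] [NormedAlgebra ℂ 𝔸] {A : 𝔸}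

/-- The functional calculus of an involution `A`: `(a, b)` acts as `a` on the `+1`-eigenspace
and as `b` on the `-1`-eigenspace of `A`. -/
noncomputable def algHomOfSqEqOne (hA : A ^ 2 = 1) : ℂ × ℂ →ₐ[ℂ] 𝔸 where
  toFun x := ((x.1 + x.2) / 2) • 1 + ((x.1 - x.2) / 2) • A
  map_one' := by norm_num
  map_mul' x y := by
    have hA' : A * A = 1 := by rw [← sq, hA]
    simp only [Prod.fst_mul, Prod.snd_mul, add_mul, mul_add, smul_mul_smul_comm, one_mul,
      mul_one, hA']
    module
  map_zero' := by simp
  map_add' x y := by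
    simp only [Prod.fst_add, Prod.snd_add]
    module
  commutes' c := by
    simp only [Algebra.algebraMap_eq_smul_one, Prod.smul_fst, Prod.smul_snd, Prod.fst_one,
      Prod.snd_one, smul_eq_mul, mul_one]
    module

theorem exp_smul_of_sq_eq_one (hA : A ^ 2 = 1) (z : ℂ) :
    NormedSpace.exp (z • A) = cosh z • (1 : 𝔸) + sinh z • A := by
  let : Algebra ℚ 𝔸 := RestrictScalars.algebra ℚ ℂ 𝔸
  set f := algHomOfSqEqOne hA
  have hf : Continuous f := f.toLinearMap.continuous_of_finiteDimensional
  calc NormedSpace.exp (z • A) = NormedSpace.exp (f (z, -z)) := by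
        congr 1
        simp only [f, algHomOfSqEqOne, AlgHom.coe_mk, RingHom.coe_mk, MonoidHom.coe_mk,
          OneHom.coe_mk]
        module
    _ = f (Complex.exp z, Complex.exp (-z)) := by
        rw [← NormedSpace.map_exp f hf]
        congr 1
        ext <;> simp [Complex.exp_eq_exp_ℂ]
    _ = cosh z • (1 : 𝔸) + sinh z • A := by
        simp only [f, algHomOfSqEqOne, AlgHom.coe_mk, RingHom.coe_mk, MonoidHom.coe_mk,
          OneHom.coe_mk, Complex.cosh, Complex.sinh]

theorem exp_neg_I_arctan_smul (hA : A ^ 2 = 1) (τ : ℝ) :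
    NormedSpace.exp ((-(I * (Real.arctan τ : ℂ))) • A) =
      (((√(1 + τ ^ 2))⁻¹ : ℝ) : ℂ) • (1 - (I * τ) • A) := by
  rw [show -(I * (Real.arctan τ : ℂ)) = ((-Real.arctan τ : ℝ) : ℂ) * I by push_cast; ring,
    exp_smul_of_sq_eq_one hA, cosh_mul_I, sinh_mul_I, ← ofReal_cos, ← ofReal_sin,
    Real.cos_neg, Real.sin_neg, Real.cos_arctan, Real.sin_arctan]
  push_cast
  module

theorem sum_prod_smul_prod_exp_neg_I_arctan {ι : Type*} [Fintype ι] (P : ι → 𝔸)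
    (hP : ∀ l, P l ^ 2 = 1) (p : ι → ℝ) (hsum : ∑ l, p l = 1) (τ : ℝ) (r : ℕ) :
    ∑ l : Fin r → ι, (∏ i, (p (l i) : ℂ)) •
        (List.ofFn fun i => NormedSpace.exp ((-(I * (Real.arctan τ : ℂ))) • P (l i))).reverse.prod =
      (((1 + τ ^ 2 : ℝ) ^ (-(r : ℝ) / 2) : ℝ) : ℂ) •
        (1 - (I * τ) • ∑ l, (p l : ℂ) • P l) ^ r := by
  set c : ℂ := (((√(1 + τ ^ 2))⁻¹ : ℝ) : ℂ) with hc
  have hmean : ∑ l, (p l : ℂ) • (1 - (I * τ) • P l) = 1 - (I * τ) • ∑ l, (p l : ℂ) • P l := by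
    simp only [smul_sub, Finset.sum_sub_distrib, ← Finset.sum_smul, ← ofReal_sum, hsum,
      ofReal_one, one_smul, Finset.smul_sum, smul_comm (p _ : ℂ) (I * τ)]
  calc _ = ∑ l : Fin r → ι, c ^ r •
          (List.ofFn fun i => (p (l i) : ℂ) • (1 - (I * τ) • P (l i))).reverse.prod := by
        refine Finset.sum_congr rfl fun l _ => ?_
        simp only [c, exp_neg_I_arctan_smul (hP _), List.prod_reverse_ofFn_smul,
          Finset.prod_const, Finset.card_univ, Fintype.card_fin]
        exact smul_comm _ _ _
    _ = _ := by
        rw [← Finset.smul_sum,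
          Finset.sum_prod_reverse_ofFn_eq_pow fun l => (p l : ℂ) • (1 - (I * τ) • P l), hmean,
          hc, ← ofReal_pow, Real.inv_sqrt_pow (by positivity)]

end Involution

theorem qdrift_hadamard_expectation {n L r : ℕ} (P : Fin L → Matrix (Fin n) (Fin n) ℂ)
    (hInv : ∀ l, P l ^ 2 = 1)
    (p : Fin L → ℝ) (hsum : ∑ l, p l = 1)
    (ψ : Fin n → ℂ) (τ : ℝ) :
    ∑ l : Fin r → Fin L,
      ((∏ i, ((p (l i) : ℝ) : ℂ)) *
        (star ψ ⬝ᵥ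
          (((List.ofFn fun i : Fin r =>
              NormedSpace.exp
                ((-(Complex.I * (Real.arctan τ : ℂ))) • P (l i))).reverse.prod) *ᵥ ψ))) =
      ((((1 + τ ^ 2 : ℝ) ^ (-(r : ℝ) / 2) : ℝ)) : ℂ) *
        (star ψ ⬝ᵥ
          ((((1 : Matrix (Fin n) (Fin n) ℂ)
              - (Complex.I * (τ : ℂ)) • ∑ l, ((p l : ℝ) : ℂ) • P l) ^ r) *ᵥ ψ)) := by
  -- `NormedSpace.exp` depends only on the topology, which this norm induces.
  let : NormedRing (Matrix (Fin n) (Fin n) ℂ) := Matrix.linftyOpNormedRing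
  let : NormedAlgebra ℂ (Matrix (Fin n) (Fin n) ℂ) := Matrix.linftyOpNormedAlgebra
  have h := congrArg (fun M => star ψ ⬝ᵥ (M *ᵥ ψ))
    (sum_prod_smul_prod_exp_neg_I_arctan P hInv p hsum τ r)
  simp only [sum_mulVec, dotProduct_sum, smul_mulVec, dotProduct_smul, smul_eq_mul] at h
  exact h
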